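/- Define F_n(t) = det 𝓜ᴮ_n with F_{-1}(t) = F_0(t) = 1. Then for n ≥ 1: F_n(t) = Σ_{i=1}^{n} (-1)^{i-1} t^{C(i,2)} F_{n-i}(t) + (-1)^n t^{n^2}. -/

import Mathlib

open Polynomial

/-- The `(n+1) × (n+1)` matrix `𝓜ᴮ_n` over `ℤ[t]`: its `(i, n+1)` entry (1-based) is
`t^{(n-i+1)^2}`, and for `j ≤ n` its `(i,j)` entry is `t^{C(j-i+1,2)}` when
`j - i + 1 ≥ 0` and `0` otherwise. -/
noncomputable def MatB (n : ℕ) : Matrix (Fin (n + 1)) (Fin (n + 1)) (Polynomial ℤ) :=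
  Matrix.of fun i j =>
    if (j : ℕ) = n then (X : Polynomial ℤ) ^ ((n - (i : ℕ)) ^ 2)
    else if (i : ℕ) ≤ (j : ℕ) + 1 then (X : Polynomial ℤ) ^ (((j : ℕ) + 1 - (i : ℕ)).choose 2)
    else 0

/-- `F_m = det 𝓜ᴮ_m` for `m ≥ 0`, and `F_{-1} = 1` (note `F_0 = 1` as well). -/
noncomputable def polyF (m : ℤ) : Polynomial ℤ :=
  if 0 ≤ m then (MatB m.toNat).det else 1

/-!
Expand `det 𝓜ᴮ_n` along its first row. Deleting the first row and the column `j` leaves a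
matrix whose first `j` columns carry the unit subdiagonal of `𝓜ᴮ_n` and vanish below it, so
expanding along those columns one at a time strips them off; what remains is the lower right
block of `𝓜ᴮ_n`, which is `𝓜ᴮ_{n-j-1}`. For the last column nothing remains and the minor is
`1 = F_{-1}`.
-/

theorem Matrix.det_submatrix_succ_succAbove_succ {R : Type*} [CommRing R] {n : ℕ}
    (A : Matrix (Fin (n + 2)) (Fin (n + 2)) R) (j : Fin (n + 1)) (h_one : A 1 0 = 1)
    (h_zero : ∀ i : Fin n, A i.succ.succ 0 = 0) :
    (A.submatrix Fin.succ j.succ.succAbove).det =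
      ((A.submatrix Fin.succ Fin.succ).submatrix Fin.succ j.succAbove).det := by
  rw [Matrix.det_succ_column_zero, Fin.sum_univ_succ]
  simp only [Matrix.submatrix_apply, Fin.succ_succAbove_zero, h_zero, mul_zero, zero_mul,
    Finset.sum_const_zero, add_zero, Fin.succ_zero_eq_one, h_one, Fin.val_zero, pow_zero,
    one_mul, Fin.succAbove_zero]
  congr 1
  ext i k
  simp only [Matrix.submatrix_apply, Fin.succ_succAbove_succ]

theorem polyF_natCast (n : ℕ) : polyF n = (MatB n).det := by
  simp [polyF]

theorem matB_submatrix_succ_succ (n : ℕ) : (MatB (n + 1)).submatrix Fin.succ Fin.succ = MatB n := by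
  ext i k
  simp only [Matrix.submatrix_apply, MatB, Matrix.of_apply, Fin.val_succ, add_left_inj,
    Nat.add_sub_add_right, add_le_add_iff_right]

theorem matB_succ_one_zero (n : ℕ) : MatB (n + 1) 1 0 = 1 := by
  simp [MatB]

theorem matB_succ_apply_zero_of_one_lt (n : ℕ) (i : Fin (n + 2)) (hi : 1 < (i : ℕ)) :
    MatB (n + 1) i 0 = 0 := by
  simp only [MatB, Matrix.of_apply]
  rw [if_neg (by simp), if_neg (by simp; omega)]

theorem matB_zero_castSucc (n : ℕ) (j : Fin (n + 1)) :
    MatB (n + 1) 0 j.castSucc = X ^ ((j : ℕ) + 1).choose 2 := by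
  simp [MatB, j.isLt.ne]

theorem matB_zero_last (n : ℕ) : MatB n 0 (Fin.last n) = X ^ (n ^ 2) := by
  simp [MatB]

theorem det_submatrix_matB_succ_zero (n : ℕ) (j : Fin (n + 2)) :
    ((MatB (n + 1)).submatrix Fin.succ j.succAbove).det = polyF (n - j) := by
  induction n with
  | zero => fin_cases j <;> simp [MatB, polyF, Matrix.det_unique]
  | succ n ih =>
    cases j using Fin.cases with
    | zero =>
      rw [Fin.succAbove_zero, matB_submatrix_succ_succ, Fin.val_zero, Nat.cast_zero, sub_zero,
        polyF_natCast]
    | succ j =>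
      rw [Matrix.det_submatrix_succ_succAbove_succ _ _ (matB_succ_one_zero _)
        fun i => matB_succ_apply_zero_of_one_lt _ _ (by simp),
        matB_submatrix_succ_succ, ih, Fin.val_succ]
      push_cast
      ring_nf

/-- `F_n(t) = ∑_{i=1}^{n} (-1)^{i-1} t^{C(i,2)} F_{n-i}(t) + (-1)^n t^{n^2}` for `n ≥ 1`. -/
theorem polyF_recurrence :
    ∀ n : ℕ, 1 ≤ n → polyF n =
      (∑ i ∈ Finset.range n,
          (-1 : Polynomial ℤ) ^ i * ((X : Polynomial ℤ) ^ ((i + 1).choose 2) * polyF ((n : ℤ) - (i + 1)))) +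
        (-1 : Polynomial ℤ) ^ n * (X : Polynomial ℤ) ^ (n ^ 2) := by
  intro n hn
  obtain ⟨m, rfl⟩ : ∃ m, n = m + 1 := ⟨n - 1, by omega⟩
  rw [polyF_natCast, Matrix.det_succ_row_zero, Fin.sum_univ_castSucc, ← Fin.sum_univ_eq_sum_range]
  refine congrArg₂ (· + ·) (Finset.sum_congr rfl fun j _ => ?_) ?_
  · rw [matB_zero_castSucc, det_submatrix_matB_succ_zero, Fin.val_castSucc]
    push_cast
    ring_nf
  · rw [matB_zero_last, det_submatrix_matB_succ_zero, Fin.val_last]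
    simp [polyF]
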